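/- arXiv:2012.01025 — 3 statements merged into one kernel-verified Lean document; each statement's English description precedes it below -/
import Mathlib

section
/- A rule φ satisfies recursive dominance if and only if φ is strategy-proof. In particular, if φ is strategy-proof, then for every agent a, preference P_a, profile P_{-a} of preferences of the other agents, subset I ⊆ O, enumeration γ of I, and any preference P* whose top |I| objects are exactly γ in that order, we have φ_a(γ ⊕ P_a|_{O∖I}, P_{-a}) is weakly preferred by P_a to φ_a(P*, P_{-a}). -/
variable {A O : Type*}

/-- A rule is strategy-proof: truthful reporting yields a weakly preferred
assignment. (Larger in the linear order means more preferred.) -/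
def StrategyProof [DecidableEq A] (φ : (A → LinearOrder O) → A → O) : Prop :=
  ∀ (P : A → LinearOrder O) (a : A) (Q : LinearOrder O),
    (P a).le (φ (Function.update P a Q) a) (φ P a)

/-- `s` is a top initial segment of the preference `L`: every object in `s`
is strictly preferred to every object outside `s`. -/
def IsTopSegment (L : LinearOrder O) (s : Finset O) : Prop :=
  ∀ o ∈ s, ∀ o' ∉ s, L.lt o' o

/-- Two preferences rank the objects of `s` in the same relative order. -/
def AgreeOn (L L' : LinearOrder O) (s : Finset O) : Prop :=
  ∀ o ∈ s, ∀ o' ∈ s, (L.lt o o' ↔ L'.lt o o')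

/-- Two preferences rank the objects outside `s` in the same relative order. -/
def AgreeOutside (L L' : LinearOrder O) (s : Finset O) : Prop :=
  ∀ o ∉ s, ∀ o' ∉ s, (L.lt o o' ↔ L'.lt o o')

/-- Recursive dominance: for every agent `a`, true preference `P a`, set `s ⊆ O`
with an enumeration `γ` of `s` (encoded by requiring `Q` and `Qstar` to both have
`s` as a top segment ranked in the same order `γ`), letting `Q = γ ⊕ P a |_{O∖s}`
(top segment `γ`, remainder ordered as `P a`) and `Qstar ∈ ℙ|_γ` arbitrary,
`φ_a(Q, P_{-a})` is weakly preferred under `P a` to `φ_a(Qstar, P_{-a})`. -/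
def RecursiveDominance [DecidableEq A] (φ : (A → LinearOrder O) → A → O) : Prop :=
  ∀ (P : A → LinearOrder O) (a : A) (s : Finset O) (Q Qstar : LinearOrder O),
    IsTopSegment Q s → IsTopSegment Qstar s → AgreeOn Q Qstar s →
    AgreeOutside Q (P a) s →
    (P a).le (φ (Function.update P a Qstar) a) (φ (Function.update P a Q) a)

theorem IsTopSegment.mem_of_lt {L : LinearOrder O} {s : Finset O} (hs : IsTopSegment L s)
    {x y : O} (hxy : L.lt x y) (hx : x ∈ s) : y ∈ s := by
  by_contra hy
  exact @lt_asymm O L.toPreorder _ _ hxy (hs x hx y hy)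

theorem AgreeOn.notMem_of_lt_of_lt {Q Q' : LinearOrder O} {s : Finset O} (hagree : AgreeOn Q Q' s)
    (hQ : IsTopSegment Q s) (hQ' : IsTopSegment Q' s) {x y : O} (hxy : Q.lt x y)
    (hyx : Q'.lt y x) : x ∉ s ∧ y ∉ s := by
  have not_both (hx : x ∈ s) (hy : y ∈ s) : False :=
    @lt_asymm O Q'.toPreorder _ _ ((hagree x hx y hy).1 hxy) hyx
  exact ⟨fun hx => not_both hx (hQ.mem_of_lt hxy hx), fun hy => not_both (hQ'.mem_of_lt hyx hy) hy⟩

theorem isTopSegment_empty (L : LinearOrder O) : IsTopSegment L ∅ := by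
  simp [IsTopSegment]

theorem agreeOn_empty (L L' : LinearOrder O) : AgreeOn L L' ∅ := by
  simp [AgreeOn]

theorem agreeOutside_refl (L : LinearOrder O) (s : Finset O) : AgreeOutside L L s :=
  fun _ _ _ _ => Iff.rfl

section Rule

variable [DecidableEq A] {φ : (A → LinearOrder O) → A → O}

theorem RecursiveDominance.strategyProof (h : RecursiveDominance φ) : StrategyProof φ := by
  intro P a Q
  simpa only [Function.update_eq_self] using
    h P a ∅ (P a) Q (isTopSegment_empty _) (isTopSegment_empty _) (agreeOn_empty _ _)
      (agreeOutside_refl _ _)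

theorem StrategyProof.le_update (h : StrategyProof φ) (P : A → LinearOrder O) (a : A)
    (Q Q' : LinearOrder O) : Q.le (φ (Function.update P a Q') a) (φ (Function.update P a Q) a) := by
  have h_truthful := h (Function.update P a Q) a Q'
  rwa [Function.update_idem, Function.update_self] at h_truthful

/-- If the reports `Q` and `Qstar` lead to different objects, each report ranks its own outcome
higher, so the two outcomes are ranked oppositely by `Q` and `Qstar`. That forces both outside
the common top segment, where `Q` ranks them as the true preference does. -/
theorem StrategyProof.recursiveDominance (h : StrategyProof φ) : RecursiveDominance φ := by
  intro P a s Q Qstar hQ hQstar hagree hout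
  set x := φ (Function.update P a Qstar) a
  set y := φ (Function.update P a Q) a
  obtain hxy | hne := eq_or_ne x y
  · exact hxy ▸ (P a).le_refl x
  have hlt : Q.lt x y := @lt_of_le_of_ne O Q.toPartialOrder _ _ (h.le_update P a Q Qstar) hne
  have hlt' : Qstar.lt y x :=
    @lt_of_le_of_ne O Qstar.toPartialOrder _ _ (h.le_update P a Qstar Q) hne.symm
  obtain ⟨hx, hy⟩ := hagree.notMem_of_lt_of_lt hQ hQstar hlt hlt'
  exact @le_of_lt O (P a).toPreorder _ _ ((hout x hx y hy).1 hlt)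

end Rule

theorem recursiveDominance_iff_strategyProof_general [DecidableEq A]
    (φ : (A → LinearOrder O) → A → O) :
    RecursiveDominance φ ↔ StrategyProof φ :=
  ⟨RecursiveDominance.strategyProof, StrategyProof.recursiveDominance⟩

/-- A rule satisfies recursive dominance if and only if it is strategy-proof. -/
theorem recursiveDominance_iff_strategyProof [Finite A] [Finite O] [DecidableEq A]
    (φ : (A → LinearOrder O) → A → O) :
    RecursiveDominance φ ↔ StrategyProof φ :=
  recursiveDominance_iff_strategyProof_general φ
end

section
/- Let O = {o1, o2, o3, ∅} and consider a single agent a. Define the rule φ* by: φ*(P) = o1 if o1 P o2 and o2 P o3 (i.e., preference order is o1, o2, o3 at the top); φ*(P) = o3 if o1 P o3 and o3 P o2 with o1 top; and φ*(P) = ∅ otherwise. Then φ* does not satisfy monotonic discoverability. -/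
open Classical

/-- `P'` is a continuation profile of `P` at allocation `μ` (i.e. `P' ∈ L(P, μ)`). -/
def InLowerContour {A O : Type*} (P : A → LinearOrder O) (μ : A → O)
    (P' : A → LinearOrder O) : Prop :=
  ∀ a : A, ∀ o o' : O, (P a).le (μ a) o → ((P a).lt o' o ↔ (P' a).lt o' o)

/-- A rule `φ` satisfies monotonic discoverability: for every allocation `μ`
and profile `P`, either `φ P = μ` or some agent `a*` is not assigned `μ a*`
under any continuation profile of `P` at `μ`. -/
def MonotonicDiscoverability {A O : Type*} (φ : (A → LinearOrder O) → A → O) : Prop :=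
  ∀ (μ : A → O) (P : A → LinearOrder O),
    φ P = μ ∨ ∃ a : A, ∀ P' : A → LinearOrder O, InLowerContour P μ P' → φ P' a ≠ μ a

/-- Objects: `0 = o1`, `1 = o2`, `2 = o3`, `3 = ∅` (the null object).
Single agent (`PUnit`).  Larger in the linear order means more preferred.
`φ* P = o1` if the top three objects of `P` in order are `o1, o2, o3`;
`φ* P = o3` if they are `o1, o3, o2`; otherwise `φ* P = ∅`. -/
noncomputable def phiStar (P : PUnit → LinearOrder (Fin 4)) : PUnit → Fin 4 := fun _ =>
  if (P PUnit.unit).lt 1 0 ∧ (P PUnit.unit).lt 2 1 ∧ (P PUnit.unit).lt 3 2 then 0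
  else if (P PUnit.unit).lt 2 0 ∧ (P PUnit.unit).lt 1 2 ∧ (P PUnit.unit).lt 3 1 then 2
  else 3

/-! When each agent's allotment is his favourite object, every profile keeping these favourites
on top is a continuation profile, so no agent is ever ruled out from getting his allotment.
Take `μ = o1`: at the ranking `o1, o3, o2` the rule `φ*` gives `o3 ≠ o1`, yet at the
continuation `o1, o2, o3` it gives `o1`. -/

theorem not_monotonicDiscoverability_of {A O : Type*} {φ : (A → LinearOrder O) → A → O}
    (μ : A → O) (P : A → LinearOrder O) (hne : φ P ≠ μ)
    (hcont : ∀ a, ∃ P', InLowerContour P μ P' ∧ φ P' a = μ a) :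
    ¬ MonotonicDiscoverability φ := fun h =>
  (h μ P).elim hne fun ⟨a, ha⟩ => let ⟨P', hP', hφ⟩ := hcont a; ha P' hP' hφ

theorem inLowerContour_of_forall_le {A O : Type*} {P P' : A → LinearOrder O} {μ : A → O}
    (hP : ∀ a o, (P a).le o (μ a)) (hP' : ∀ a o, (P' a).le o (μ a)) :
    InLowerContour P μ P' := by
  intro a o o' hle
  obtain rfl : o = μ a := (P a).le_antisymm o (μ a) (hP a o) hle
  calc (P a).lt o' (μ a) ↔ o' ≠ μ a := by let := P a; exact (hP a o').lt_iff_ne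
    _ ↔ (P' a).lt o' (μ a) := by let := P' a; exact (hP' a o').lt_iff_ne.symm

abbrev prefO1O3O2 : LinearOrder (Fin 4) :=
  LinearOrder.lift' (![3, 1, 2, 0] : Fin 4 → Fin 4) (by decide)

abbrev prefO1O2O3 : LinearOrder (Fin 4) :=
  LinearOrder.lift' (![3, 2, 1, 0] : Fin 4 → Fin 4) (by decide)

theorem prefO1O3O2_lt_iff (o o' : Fin 4) :
    prefO1O3O2.lt o o' ↔ (![3, 1, 2, 0] : Fin 4 → Fin 4) o < ![3, 1, 2, 0] o' := Iff.rfl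

theorem prefO1O2O3_lt_iff (o o' : Fin 4) :
    prefO1O2O3.lt o o' ↔ (![3, 2, 1, 0] : Fin 4 → Fin 4) o < ![3, 2, 1, 0] o' := Iff.rfl

theorem prefO1O3O2_le_zero (o : Fin 4) : prefO1O3O2.le o 0 :=
  Fin.le_last (n := 3) (![3, 1, 2, 0] o)

theorem prefO1O2O3_le_zero (o : Fin 4) : prefO1O2O3.le o 0 :=
  Fin.le_last (n := 3) (![3, 2, 1, 0] o)

theorem phiStar_prefO1O3O2 : phiStar (fun _ => prefO1O3O2) = fun _ => 2 := by
  funext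
  exact (if_neg (by simp only [prefO1O3O2_lt_iff]; decide)).trans
    (if_pos (by simp only [prefO1O3O2_lt_iff]; decide))

theorem phiStar_prefO1O2O3 : phiStar (fun _ => prefO1O2O3) = fun _ => 0 := by
  funext
  exact if_pos (by simp only [prefO1O2O3_lt_iff]; decide)

/-- The rule `φ*` does not satisfy monotonic discoverability. -/
theorem phiStar_not_monotonicDiscoverability : ¬ MonotonicDiscoverability phiStar := by
  refine not_monotonicDiscoverability_of (fun _ => 0) (fun _ => prefO1O3O2) ?_ fun _ =>
    ⟨fun _ => prefO1O2O3, ?_, ?_⟩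
  · rw [phiStar_prefO1O3O2]
    exact fun h => absurd (congrFun h PUnit.unit) (by decide)
  · exact inLowerContour_of_forall_le (fun _ => prefO1O3O2_le_zero) fun _ => prefO1O2O3_le_zero
  · rw [phiStar_prefO1O2O3]
end

section
/- If a rule φ is strategy-proof, then for every agent a, preference profile P, and subset I of objects forming a top initial segment of P_a (i.e., I is the set of the k most-preferred objects under P_a for some k), modifying P_a by arbitrarily reordering the objects in O∖I below I does not change agent a's assignment when a's original assignment lies in I. -/
variable {A O : Type*}

/-- Strategy-proofness at the profile `Function.update P a Q`, against the deviation back to `P a`. -/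
theorem StrategyProof.le_apply_update [DecidableEq A] {φ : (A → LinearOrder O) → A → O}
    (hSP : StrategyProof φ) (P : A → LinearOrder O) (a : A) (Q : LinearOrder O) :
    Q.le (φ P a) (φ (Function.update P a Q) a) := by
  have h := hSP (Function.update P a Q) a (P a)
  rwa [Function.update_self, Function.update_idem, Function.update_eq_self] at h

theorem IsTopSegment.mem_of_le {L : LinearOrder O} {s : Finset O} (hs : IsTopSegment L s)
    {x y : O} (hx : x ∈ s) (hxy : L.le x y) : y ∈ s := by
  let _ := L
  by_contra hy
  exact not_lt_of_ge hxy (hs x hx y hy)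

theorem AgreeOn.le_iff {L L' : LinearOrder O} {s : Finset O} (h : AgreeOn L L' s)
    {x y : O} (hx : x ∈ s) (hy : y ∈ s) : L.le x y ↔ L'.le x y := by
  have key := h y hy x hx
  let _ := L
  rw [← not_lt]
  let _ := L'
  rw [← not_lt]
  exact not_congr key

theorem strategyProof_top_segment_invariance_general [DecidableEq A]
    (φ : (A → LinearOrder O) → A → O) (hSP : StrategyProof φ)
    (P : A → LinearOrder O) (a : A) (Q : LinearOrder O) (s : Finset O)
    (h2 : IsTopSegment Q s)
    (h3 : AgreeOn (P a) Q s) (h4 : φ P a ∈ s) :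
    φ (Function.update P a Q) a = φ P a := by
  have hQ : Q.le (φ P a) (φ (Function.update P a Q) a) := hSP.le_apply_update P a Q
  have hmem : φ (Function.update P a Q) a ∈ s := h2.mem_of_le h4 hQ
  have hPa : (P a).le (φ P a) (φ (Function.update P a Q) a) := (h3.le_iff h4 hmem).2 hQ
  exact (P a).le_antisymm _ _ (hSP P a Q) hPa

/-- If `φ` is strategy-proof, `P a` and `Q` agree on a common top segment `s`
(same set, ranked in the same order, at the top of both), and `a`'s assignment
under `P` lies in `s`, then reporting `Q` instead of `P a` (reordering the
objects below `s` arbitrarily) does not change `a`'s assignment. -/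
theorem strategyProof_top_segment_invariance [Finite A] [Finite O] [DecidableEq A]
    (φ : (A → LinearOrder O) → A → O) (hSP : StrategyProof φ)
    (P : A → LinearOrder O) (a : A) (Q : LinearOrder O) (s : Finset O)
    (h1 : IsTopSegment (P a) s) (h2 : IsTopSegment Q s)
    (h3 : AgreeOn (P a) Q s) (h4 : φ P a ∈ s) :
    φ (Function.update P a Q) a = φ P a :=
  strategyProof_top_segment_invariance_general φ hSP P a Q s h2 h3 h4
end
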